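/- Let b > 0 and let k ≥ 1 be a natural number. Let μ be the product measure on ℝ^k each of whose k factors is the Laplace measure with scale b. Let v be a real number with v ≥ √k · b, and let λ be a real number with 0 < λ < 2√2 · v²/b. Then μ({x ∈ ℝ^k : ∑_{i=1}^{k} x_i > λ}) ≤ exp(−λ²/(8v²)). -/

import Mathlib

/-! Chernoff's method. For `|t| < 1 / b` the Laplace measure has moment generating function
`(1 - b²t²)⁻¹`, so the sum of `k` independent copies has `(1 - b²t²)⁻ᵏ ≤ exp (2 k b² t²)` as soon
as `b²t² ≤ 1/2`, using `(1 - u)⁻¹ ≤ 1 + 2u ≤ exp (2u)` on `[0, 1/2]`. Markov's inequality for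
`exp (t S)` and `k b² ≤ v²` bound the tail by `exp (-t λ + 2 v² t²)`; the optimal
`t = λ / (4 v²)` gives `exp (-λ² / (8 v²))`, and it satisfies `b²t² ≤ 1/2` precisely because
`λ < 2√2 v² / b`. -/

open MeasureTheory Real

/-- The Laplace measure with scale `b`. -/
noncomputable def laplaceMeasure (b : ℝ) : Measure ℝ :=
  volume.withDensity (fun x => ENNReal.ofReal ((1 / (2 * b)) * Real.exp (-|x| / b)))

open Set ProbabilityTheory

lemma integrable_exp_mul_sub_mul_abs {c t : ℝ} (ht : |t| < c) :
    Integrable (fun x : ℝ => exp (t * x - c * |x|)) := by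
  obtain ⟨htc, hct⟩ := abs_lt.mp ht
  rw [← integrableOn_univ, ← Iic_union_Ioi (a := 0)]
  refine IntegrableOn.union ?_ ?_
  · refine (integrableOn_exp_mul_Iic (a := t + c) (by linarith) 0).congr_fun
      (fun x hx => ?_) measurableSet_Iic
    rw [abs_of_nonpos hx]; ring_nf
  · refine (integrableOn_exp_mul_Ioi (a := t - c) (by linarith) 0).congr_fun
      (fun x hx => ?_) measurableSet_Ioi
    rw [abs_of_pos (mem_Ioi.mp hx)]; ring_nf

lemma integral_exp_mul_sub_mul_abs {c t : ℝ} (ht : |t| < c) :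
    ∫ x : ℝ, exp (t * x - c * |x|) = 2 * c / (c ^ 2 - t ^ 2) := by
  obtain ⟨htc, hct⟩ := abs_lt.mp ht
  have hI := integrable_exp_mul_sub_mul_abs ht
  rw [← intervalIntegral.integral_Iic_add_Ioi (b := 0) hI.integrableOn hI.integrableOn,
    setIntegral_congr_fun measurableSet_Iic (g := fun x => exp ((t + c) * x))
      (fun x hx => by rw [abs_of_nonpos hx]; ring_nf),
    setIntegral_congr_fun measurableSet_Ioi (g := fun x => exp ((t - c) * x))
      (fun x hx => by rw [abs_of_pos (mem_Ioi.mp hx)]; ring_nf),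
    integral_exp_mul_Iic (by linarith), integral_exp_mul_Ioi (by linarith)]
  simp only [mul_zero, exp_zero]
  have : t + c ≠ 0 := by linarith
  have : t - c ≠ 0 := by linarith
  have : c ^ 2 - t ^ 2 ≠ 0 := by nlinarith
  field_simp
  ring

lemma integrable_laplaceMeasure_iff {b : ℝ} (hb : 0 ≤ b) {g : ℝ → ℝ} :
    Integrable g (laplaceMeasure b) ↔
      Integrable (fun x => g x * (1 / (2 * b) * exp (-|x| / b))) := by
  rw [laplaceMeasure, integrable_withDensity_iff (by fun_prop) (by simp)]
  simp_rw [ENNReal.toReal_ofReal (by positivity : 0 ≤ 1 / (2 * b) * exp (-|_| / b))]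

lemma integral_laplaceMeasure {b : ℝ} (hb : 0 ≤ b) (g : ℝ → ℝ) :
    ∫ x, g x ∂laplaceMeasure b = ∫ x, 1 / (2 * b) * exp (-|x| / b) * g x := by
  rw [laplaceMeasure, integral_withDensity_eq_integral_toReal_smul (by fun_prop) (by simp)]
  simp_rw [ENNReal.toReal_ofReal (by positivity : 0 ≤ 1 / (2 * b) * exp (-|_| / b)), smul_eq_mul]

lemma exp_mul_mul_laplace_density {b : ℝ} (t x : ℝ) :
    exp (t * x) * (1 / (2 * b) * exp (-|x| / b)) = 1 / (2 * b) * exp (t * x - b⁻¹ * |x|) := by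
  rw [sub_eq_add_neg, exp_add]; ring_nf

lemma integrable_exp_mul_laplaceMeasure {b t : ℝ} (hb : 0 ≤ b) (htc : |t| < b⁻¹) :
    Integrable (fun x => exp (t * x)) (laplaceMeasure b) := by
  rw [integrable_laplaceMeasure_iff hb]
  simp_rw [exp_mul_mul_laplace_density]
  exact (integrable_exp_mul_sub_mul_abs htc).const_mul _

lemma mgf_laplaceMeasure {b t : ℝ} (hb : 0 < b) (htc : |t| < b⁻¹) :
    mgf id (laplaceMeasure b) t = (1 - b ^ 2 * t ^ 2)⁻¹ := by
  rw [mgf, integral_laplaceMeasure hb.le]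
  have hbt : |b * t| < 1 := by rwa [abs_mul, abs_of_pos hb, ← lt_inv_mul_iff₀ hb, mul_one]
  simp_rw [id, mul_comm (1 / (2 * b) * _), exp_mul_mul_laplace_density]
  rw [integral_const_mul, integral_exp_mul_sub_mul_abs htc]
  have : 1 - b ^ 2 * t ^ 2 ≠ 0 := by nlinarith [sq_abs (b * t), abs_nonneg (b * t), hbt]
  field_simp

lemma isProbabilityMeasure_laplaceMeasure {b : ℝ} (hb : 0 < b) :
    IsProbabilityMeasure (laplaceMeasure b) := by
  have h := mgf_laplaceMeasure (t := 0) hb (by simpa using hb)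
  rw [mgf_zero', measureReal_def] at h
  exact ⟨(ENNReal.toReal_eq_one_iff _).mp (by simpa using h)⟩

section Pi

variable {ι : Type*} [Fintype ι] {μ : Measure ℝ} [SigmaFinite μ] {t : ℝ}

lemma integrable_exp_mul_sum_pi (h : Integrable (fun x => exp (t * x)) μ) :
    Integrable (fun x : ι → ℝ => exp (t * ∑ i, x i)) (Measure.pi fun _ => μ) := by
  simp_rw [Finset.mul_sum, exp_sum]
  exact Integrable.fintype_prod fun _ => h

lemma mgf_sum_pi :
    mgf (fun x : ι → ℝ => ∑ i, x i) (Measure.pi fun _ => μ) t = mgf id μ t ^ Fintype.card ι := by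
  simp_rw [mgf, Finset.mul_sum, exp_sum]
  exact integral_fintype_prod_eq_pow (fun x => exp (t * x))

end Pi

lemma inv_one_sub_le_exp_two_mul {u : ℝ} (hu₀ : 0 ≤ u) (hu : u ≤ 1 / 2) :
    (1 - u)⁻¹ ≤ exp (2 * u) :=
  calc (1 - u)⁻¹ ≤ 1 + 2 * u := by
        rw [inv_le_iff_one_le_mul₀ (by linarith)]; nlinarith
    _ ≤ exp (2 * u) := by linarith [add_one_le_exp (2 * u)]

lemma abs_lt_inv_of_sq_mul_sq_le_half {b t : ℝ} (hb : 0 < b) (h : b ^ 2 * t ^ 2 ≤ 1 / 2) :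
    |t| < b⁻¹ := by
  have hbt : |b * t| < 1 := (sq_lt_one_iff_abs_lt_one _).mp (by rw [mul_pow]; linarith)
  rw [abs_mul, abs_of_pos hb] at hbt
  simpa using (lt_inv_mul_iff₀ hb).mpr hbt

lemma mgf_sum_laplace_le {b t : ℝ} (hb : 0 < b) (ht : b ^ 2 * t ^ 2 ≤ 1 / 2)
    (ι : Type*) [Fintype ι] :
    mgf (fun x : ι → ℝ => ∑ i, x i) (Measure.pi fun _ => laplaceMeasure b) t ≤
      exp (2 * Fintype.card ι * b ^ 2 * t ^ 2) := by
  have := isProbabilityMeasure_laplaceMeasure hb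
  rw [mgf_sum_pi, mgf_laplaceMeasure hb (abs_lt_inv_of_sq_mul_sq_le_half hb ht),
    show 2 * (Fintype.card ι : ℝ) * b ^ 2 * t ^ 2 = Fintype.card ι * (2 * (b ^ 2 * t ^ 2)) by ring,
    exp_nat_mul]
  exact pow_le_pow_left₀ (inv_nonneg.mpr (by linarith))
    (inv_one_sub_le_exp_two_mul (by positivity) ht) _

lemma measure_pi_laplace_sum_ge_le {b t : ℝ} (hb : 0 < b) (ht₀ : 0 ≤ t)
    (ht : b ^ 2 * t ^ 2 ≤ 1 / 2) (ι : Type*) [Fintype ι] (lam : ℝ) :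
    Measure.pi (fun _ : ι => laplaceMeasure b) {x | lam ≤ ∑ i, x i} ≤
      ENNReal.ofReal (exp (-t * lam + 2 * Fintype.card ι * b ^ 2 * t ^ 2)) := by
  have := isProbabilityMeasure_laplaceMeasure hb
  have hint := integrable_exp_mul_sum_pi (ι := ι)
    (integrable_exp_mul_laplaceMeasure hb.le (abs_lt_inv_of_sq_mul_sq_le_half hb ht))
  rw [ENNReal.le_ofReal_iff_toReal_le (measure_ne_top _ _) (exp_nonneg _), ← measureReal_def,
    exp_add]
  exact (measure_ge_le_exp_mul_mgf lam ht₀ hint).trans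
    (mul_le_mul_of_nonneg_left (mgf_sum_laplace_le hb ht ι) (exp_nonneg _))

theorem laplace_sum_tail_bound_general (b : ℝ) (hb : 0 < b) (k : ℕ)
    (v : ℝ) (hv : Real.sqrt k * b ≤ v) (lam : ℝ) (hlam₁ : 0 < lam)
    (hlam₂ : lam < 2 * Real.sqrt 2 * v ^ 2 / b) :
    Measure.pi (fun _ : Fin k => laplaceMeasure b) {x : Fin k → ℝ | lam < ∑ i, x i} ≤
      ENNReal.ofReal (Real.exp (-lam ^ 2 / (8 * v ^ 2))) := by
  have hblam : b * lam < 2 * √2 * v ^ 2 := by rwa [lt_div_iff₀ hb, mul_comm] at hlam₂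
  have hv₀ : 0 < v ^ 2 := by nlinarith [mul_pos hb hlam₁, sqrt_nonneg 2]
  have hkb : k * b ^ 2 ≤ v ^ 2 := by
    simpa [mul_pow, sq_sqrt (Nat.cast_nonneg k)] using pow_le_pow_left₀ (by positivity) hv 2
  set t := lam / (4 * v ^ 2) with ht
  have hbt : b ^ 2 * t ^ 2 ≤ 1 / 2 := by
    have hsq : (b * lam) ^ 2 < 8 * (v ^ 2) ^ 2 := by
      nlinarith [sq_sqrt (show (0 : ℝ) ≤ 2 by norm_num), mul_pos hb hlam₁, hblam]
    rw [ht, div_pow, mul_div_assoc', div_le_iff₀ (by positivity)]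
    nlinarith [hsq]
  calc Measure.pi (fun _ : Fin k => laplaceMeasure b) {x | lam < ∑ i, x i}
      ≤ Measure.pi (fun _ : Fin k => laplaceMeasure b) {x | lam ≤ ∑ i, x i} :=
        measure_mono fun _ (hx : lam < _) => hx.le
    _ ≤ ENNReal.ofReal (exp (-t * lam + 2 * Fintype.card (Fin k) * b ^ 2 * t ^ 2)) :=
        measure_pi_laplace_sum_ge_le hb (by positivity) hbt _ lam
    _ ≤ ENNReal.ofReal (exp (-t * lam + 2 * v ^ 2 * t ^ 2)) := by
        rw [Fintype.card_fin]; gcongr ENNReal.ofReal (exp (_ + ?_)); nlinarith [sq_nonneg t]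
    _ = ENNReal.ofReal (exp (-lam ^ 2 / (8 * v ^ 2))) := by
        rw [ht]; field_simp; ring_nf

theorem laplace_sum_tail_bound (b : ℝ) (hb : 0 < b) (k : ℕ) (hk : 1 ≤ k)
    (v : ℝ) (hv : Real.sqrt k * b ≤ v) (lam : ℝ) (hlam₁ : 0 < lam)
    (hlam₂ : lam < 2 * Real.sqrt 2 * v ^ 2 / b) :
    Measure.pi (fun _ : Fin k => laplaceMeasure b) {x : Fin k → ℝ | lam < ∑ i, x i} ≤
      ENNReal.ofReal (Real.exp (-lam ^ 2 / (8 * v ^ 2))) :=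
  laplace_sum_tail_bound_general b hb k v hv lam hlam₁ hlam₂
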